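/- Let D = F_q \ {β_1,...,β_l} with |D| > k, and fix i with 1 ≤ i ≤ l. The word u = (1/(α - β_i))_{α ∈ D} is a deep hole of RS_q(D,k), i.e., d(u, RS_q(D,k)) = |D| - k. -/

import Mathlib

/-- Error distance of a word `u` to a code `C`. -/
noncomputable def errDist {ι F : Type*} [Fintype ι] [DecidableEq F]
    (u : ι → F) (C : Set (ι → F)) : ℕ :=
  sInf ((fun c => hammingDist u c) '' C)

/-- The Reed-Solomon code with evaluation set `D` and dimension `k`. -/
noncomputable def RSCode {F : Type*} [Field F] (D : Finset F) (k : ℕ) : Set (D → F) :=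
  {v | ∃ f : Polynomial F, f.degree < k ∧ ∀ α : D, v α = f.eval (α : F)}

/-!
Every word is within distance `|D| - k` of `RS(D, k)`: interpolate it on `k` points of `D`.
Conversely, if `(α - β)⁻¹ = f(α)` with `deg f < k`, then `α` is a root of `(X - β) f - 1`,
a polynomial of degree at most `k` which is nonzero because it takes the value `-1` at `β`;
so `u` agrees with every codeword in at most `k` positions.
-/

open Finset Polynomial

section ErrorDistance

variable {ι α : Type*} [Fintype ι] [DecidableEq α]

theorem hammingDist_add_card_filter_eq (x y : ι → α) :
    hammingDist x y + #{i | x i = y i} = Fintype.card ι := by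
  rw [hammingDist, add_comm, ← card_univ]
  exact card_filter_add_card_filter_not _

theorem errDist_le_hammingDist {u c : ι → α} {C : Set (ι → α)} (hc : c ∈ C) :
    errDist u C ≤ hammingDist u c :=
  Nat.sInf_le ⟨c, hc, rfl⟩

theorem card_sub_le_errDist_of_card_filter_le {u : ι → α} {C : Set (ι → α)}
    (hC : C.Nonempty) {m : ℕ} (h : ∀ c ∈ C, #{i | u i = c i} ≤ m) :
    Fintype.card ι - m ≤ errDist u C := by
  obtain ⟨c, hc, hdist⟩ := Nat.sInf_mem (hC.image fun c => hammingDist u c)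
  have hsplit := hammingDist_add_card_filter_eq u c
  have hagree := h c hc
  calc Fintype.card ι - m ≤ hammingDist u c := by omega
    _ = errDist u C := hdist

end ErrorDistance

section ReedSolomon

variable {F : Type*} [Field F]

theorem zero_mem_RSCode (D : Finset F) (k : ℕ) : 0 ∈ RSCode D k :=
  ⟨0, by simp, by simp⟩

theorem errDist_RSCode_le [DecidableEq F] {D : Finset F} {k : ℕ} (hk : k ≤ #D) (u : D → F) :
    errDist u (RSCode D k) ≤ #D - k := by
  obtain ⟨S, -, hS⟩ := exists_subset_card_eq (s := (univ : Finset D)) (n := k) (by simpa)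
  have hinj : Set.InjOn ((↑) : D → F) S := Subtype.val_injective.injOn
  set f := Lagrange.interpolate S (↑) u
  have hf : f.degree < k := hS ▸ Lagrange.degree_interpolate_lt u hinj
  calc errDist u (RSCode D k) ≤ hammingDist u fun α => f.eval (α : F) :=
        errDist_le_hammingDist ⟨f, hf, fun _ => rfl⟩
    _ ≤ #(univ \ S) := card_le_card fun α hα => by
        simp only [mem_filter, mem_univ, true_and] at hα
        simp only [mem_sdiff, mem_univ, true_and]
        exact fun hαS => hα (Lagrange.eval_interpolate_at_node u hinj hαS).symm
    _ = #D - k := by rw [card_univ_sdiff, Fintype.card_coe, hS]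

end ReedSolomon

section RootCounting

variable {F ι : Type*} [Field F] [DecidableEq F] [Fintype ι]

theorem card_filter_eval_eq_zero_le {v : ι → F} (hv : Function.Injective v) {g : F[X]}
    (hg : g ≠ 0) :
    #{i | g.eval (v i) = 0} ≤ g.natDegree := by
  calc #{i | g.eval (v i) = 0} ≤ #g.roots.toFinset :=
        card_le_card_of_injOn v (fun i hi => by simp_all [mem_roots hg]) hv.injOn
    _ ≤ Multiset.card g.roots := Multiset.toFinset_card_le _
    _ ≤ g.natDegree := card_roots' g

theorem card_filter_inv_sub_eq_eval_le {v : ι → F} (hv : Function.Injective v) {β : F}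
    (hβ : ∀ i, v i ≠ β) {f : F[X]} {k : ℕ} (hf : f.degree < k) :
    #{i | (v i - β)⁻¹ = f.eval (v i)} ≤ k := by
  set g : F[X] := (X - C β) * f - 1
  have hg : g ≠ 0 := fun h => by simpa [g] using congrArg (eval β) h
  have hgdeg : g.natDegree ≤ k := by
    rcases eq_or_ne f 0 with rfl | hf0
    · simp [g]
    have hfk := (natDegree_lt_iff_degree_lt hf0).2 hf
    refine (natDegree_sub_le_iff_left (by simp)).2 (natDegree_mul_le.trans ?_)
    rw [natDegree_X_sub_C]
    omega
  calc #{i | (v i - β)⁻¹ = f.eval (v i)} ≤ #{i | g.eval (v i) = 0} :=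
        card_le_card <| monotone_filter_right _ fun i _ hi => by
          simp [g, ← hi, sub_ne_zero.2 (hβ i)]
    _ ≤ g.natDegree := card_filter_eval_eq_zero_le hv hg
    _ ≤ k := hgdeg

end RootCounting

theorem stmt3 {F : Type*} [Field F] [Fintype F] [DecidableEq F]
    (k : ℕ) (B D : Finset F) (hD : D = Finset.univ \ B) (hk : k < D.card)
    (β : F) (hβ : β ∈ B) :
    errDist (fun α : D => ((α : F) - β)⁻¹) (RSCode D k) = D.card - k := by
  have hβD : ∀ α : D, (α : F) ≠ β := fun α h => by
    simpa [hD, h, hβ] using α.2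
  refine le_antisymm (errDist_RSCode_le hk.le _) ?_
  rw [← Fintype.card_coe D]
  refine card_sub_le_errDist_of_card_filter_le ⟨0, zero_mem_RSCode D k⟩ ?_
  rintro c ⟨f, hf, hc⟩
  obtain rfl : c = fun α : D => f.eval (α : F) := funext hc
  exact card_filter_inv_sub_eq_eval_le Subtype.val_injective hβD hf
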